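/- arXiv:2412.16790 — 3 statements merged into one kernel-verified Lean document; each statement's English description precedes it below -/
import Mathlib

section
/- For every n ≥ 5, the dual DP color function of the complete graph K_n satisfies P*_DP(K_n, 3)/3^n < P*_DP(K_n, 2)/2^n; that is, the Dual-DP Shameful (K_n, 2)-Inequality fails. -/
open scoped Classical

/-- Number of proper `k`-colorings of `G` (the chromatic polynomial evaluated at `k`). -/
noncomputable def properCount {V : Type*} (G : SimpleGraph V) (k : ℕ) : ℕ :=
  Nat.card {f : V → Fin k // ∀ u v, G.Adj u v → f u ≠ f v}

/-- Number of proper `L`-colorings of `G` for a list assignment `L`. -/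
noncomputable def listCount {V : Type*} (G : SimpleGraph V) (L : V → Finset ℕ) : ℕ :=
  Nat.card {f : V → ℕ // (∀ v, f v ∈ L v) ∧ ∀ u v, G.Adj u v → f u ≠ f v}

/-- The list color function `P_ℓ(G, k)`. -/
noncomputable def listColorFn {V : Type*} (G : SimpleGraph V) (k : ℕ) : ℕ :=
  sInf {m | ∃ L : V → Finset ℕ, (∀ v, (L v).card = k) ∧ m = listCount G L}

/-- `H` (on vertex set `V × Fin k`, with `L v = {v} × Fin k`) is a `k`-fold DP-cover of `G`:
each part is a clique, cross-edges only between parts of adjacent vertices, and the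
cross-edges between parts of adjacent vertices form a matching. -/
def IsDPCover {V : Type*} (G : SimpleGraph V) (k : ℕ) (H : SimpleGraph (V × Fin k)) : Prop :=
  (∀ v : V, ∀ i j : Fin k, i ≠ j → H.Adj (v, i) (v, j)) ∧
  (∀ u v : V, ∀ i j : Fin k, H.Adj (u, i) (v, j) → u = v ∨ G.Adj u v) ∧
  (∀ u v : V, G.Adj u v →
    (∀ i j j' : Fin k, H.Adj (u, i) (v, j) → H.Adj (u, i) (v, j') → j = j') ∧
    (∀ i i' j : Fin k, H.Adj (u, i) (v, j) → H.Adj (u, i') (v, j) → i = i'))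

/-- A full `k`-fold DP-cover: the matching between the parts of adjacent vertices is perfect. -/
def IsFullDPCover {V : Type*} (G : SimpleGraph V) (k : ℕ) (H : SimpleGraph (V × Fin k)) : Prop :=
  IsDPCover G k H ∧ ∀ u v : V, G.Adj u v → ∀ i : Fin k, ∃! j : Fin k, H.Adj (u, i) (v, j)

/-- The number of `H`-colorings of `G` (independent sets of `H` with one vertex in each part,
encoded as functions `V → Fin k`). -/
noncomputable def dpCount {V : Type*} (k : ℕ) (H : SimpleGraph (V × Fin k)) : ℕ :=
  Nat.card {f : V → Fin k // ∀ u v : V, u ≠ v → ¬ H.Adj (u, f u) (v, f v)}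

/-- The DP color function `P_DP(G, k)`. -/
noncomputable def dpColorFn {V : Type*} (G : SimpleGraph V) (k : ℕ) : ℕ :=
  sInf {m | ∃ H : SimpleGraph (V × Fin k), IsDPCover G k H ∧ m = dpCount k H}

/-- The dual DP color function `P*_DP(G, k)`. -/
noncomputable def dualDPColorFn {V : Type*} (G : SimpleGraph V) (k : ℕ) : ℕ :=
  sSup {m | ∃ H : SimpleGraph (V × Fin k), IsFullDPCover G k H ∧ m = dpCount k H}

/-!
Fix a full 3-fold cover of `K_n`, a vertex `w` and a colour `i` of `w`. Every other vertex `v`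
then has a forbidden colour `F v`, the one matched to `(w, i)`, so a colouring with `w ↦ i` is
recorded by the set of vertices coloured `F v + 1`. For two vertices `u, v ≠ w`, the two allowed
colours of `u` are matched to distinct colours of `v`, so some cross edge joins two allowed
colours; hence this family of sets shatters no pair, and Pajor's form of the Sauer–Shelah lemma
bounds it by `n`. Thus `P*_DP(K_n, 3) ≤ 3n`. The cover whose matchings all swap the two colours
has exactly the two constant colourings, so `P*_DP(K_n, 2) ≥ 2`, and `3n 2ⁿ < 2 · 3ⁿ` for `n ≥ 5`.
-/

open Finset

theorem Finset.card_le_card_add_one_of_not_shatters_pair {α : Type*} {𝒜 : Finset (Finset α)}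
    {s : Finset α} (h𝒜 : ∀ t ∈ 𝒜, t ⊆ s)
    (hpair : ∀ u ∈ s, ∀ v ∈ s, u ≠ v → ¬ 𝒜.Shatters {u, v}) : #𝒜 ≤ #s + 1 := by
  have hsub : 𝒜.shatterer ⊆ insert ∅ (s.image singleton) := by
    intro t ht
    have ht : 𝒜.Shatters t := mem_shatterer.1 ht
    have hts : t ⊆ s := by
      obtain ⟨A, hA, htA⟩ := ht.exists_superset
      exact htA.trans (h𝒜 A hA)
    rcases t.eq_empty_or_nonempty with rfl | ⟨a, ha⟩
    · exact mem_insert_self _ _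
    · refine mem_insert_of_mem (mem_image.2 ⟨a, hts ha, ?_⟩)
      refine (eq_singleton_iff_unique_mem.2 ⟨ha, fun b hb => ?_⟩).symm
      by_contra hba
      exact hpair b (hts hb) a (hts ha) hba (ht.mono_right (insert_subset hb (by simpa)))
  calc #𝒜 ≤ #𝒜.shatterer := card_le_card_shatterer 𝒜
    _ ≤ #(insert ∅ (s.image singleton)) := card_le_card hsub
    _ ≤ #(s.image singleton) + 1 := card_insert_le _ _
    _ ≤ #s + 1 := by grw [card_image_le]

theorem IsFullDPCover.exists_adj_avoiding {V : Type*} {G : SimpleGraph V} {k : ℕ}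
    {H : SimpleGraph (V × Fin k)} (hH : IsFullDPCover G k H) (hk : 3 ≤ k) {u v : V}
    (huv : G.Adj u v) (a b : Fin k) : ∃ x y, x ≠ a ∧ y ≠ b ∧ H.Adj (u, x) (v, y) := by
  have hcard : 1 < #(univ.erase a) := by
    rw [card_erase_of_mem (mem_univ a), card_univ, Fintype.card_fin]
    omega
  obtain ⟨x₁, hx₁, x₂, hx₂, hx⟩ := one_lt_card.1 hcard
  obtain ⟨y₁, hy₁, -⟩ := hH.2 u v huv x₁
  obtain ⟨y₂, hy₂, -⟩ := hH.2 u v huv x₂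
  have hy : y₁ ≠ y₂ := fun h => hx ((hH.1.2.2 u v huv).2 x₁ x₂ y₂ (h ▸ hy₁) hy₂)
  by_cases hb : y₁ = b
  · exact ⟨x₂, y₂, ne_of_mem_erase hx₂, hb ▸ hy.symm, hy₂⟩
  · exact ⟨x₁, y₁, ne_of_mem_erase hx₁, hb, hy₁⟩

noncomputable def dpColorings {V : Type*} [Fintype V] (k : ℕ) (H : SimpleGraph (V × Fin k)) :
    Finset (V → Fin k) :=
  univ.filter fun f => ∀ u v : V, u ≠ v → ¬ H.Adj (u, f u) (v, f v)

theorem dpCount_eq_card_dpColorings {V : Type*} [Fintype V] (k : ℕ)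
    (H : SimpleGraph (V × Fin k)) : dpCount k H = #(dpColorings k H) := by
  rw [dpCount, Nat.card_eq_fintype_card, Fintype.card_subtype, dpColorings]

theorem Fin.eq_of_ne_of_eq_succ_iff {c x y : Fin 3} (hx : x ≠ c) (hy : y ≠ c)
    (h : x = c + 1 ↔ y = c + 1) : x = y := by
  revert c x y; decide

theorem card_le_of_omits_allowed_pair {V : Type*} [Fintype V] (F : V → Fin 3) (s : Finset V)
    (𝒞 : Finset (V → Fin 3)) (hout : ∀ f ∈ 𝒞, ∀ v ∉ s, f v = F v)
    (hin : ∀ f ∈ 𝒞, ∀ v ∈ s, f v ≠ F v)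
    (hpair : ∀ u ∈ s, ∀ v ∈ s, u ≠ v →
      ∃ x y, x ≠ F u ∧ y ≠ F v ∧ ∀ f ∈ 𝒞, ¬ (f u = x ∧ f v = y)) :
    #𝒞 ≤ #s + 1 := by
  let E : (V → Fin 3) → Finset V := fun f => s.filter fun v => f v = F v + 1
  have hE : ∀ f, ∀ v ∈ s, v ∈ E f ↔ f v = F v + 1 := by simp +contextual [E]
  have hEinj : Set.InjOn E 𝒞 := by
    intro f hf g hg hfg
    funext v
    by_cases hv : v ∈ s
    · refine Fin.eq_of_ne_of_eq_succ_iff (hin f hf v hv) (hin g hg v hv) ?_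
      rw [← hE f v hv, ← hE g v hv, hfg]
    · rw [hout f hf v hv, hout g hg v hv]
  have hshatter : ∀ u ∈ s, ∀ v ∈ s, u ≠ v → ¬ (𝒞.image E).Shatters {u, v} := by
    intro u hu v hv huv hsh
    obtain ⟨x, y, hx, hy, hxy⟩ := hpair u hu v hv huv
    let c : V → Fin 3 := fun z => if z = u then x else y
    obtain ⟨t, ht, hct⟩ := hsh (filter_subset (fun z => c z = F z + 1) ({u, v} : Finset V))
    obtain ⟨f, hf, rfl⟩ := mem_image.1 ht
    have hfc : ∀ z ∈ ({u, v} : Finset V), f z = c z := by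
      intro z hz
      have hzs : z ∈ s := by rcases mem_insert.1 hz with rfl | hz <;> simp_all
      have hcz : c z ≠ F z := by by_cases hzu : z = u <;> simp_all [c]
      refine Fin.eq_of_ne_of_eq_succ_iff (hin f hf z hzs) hcz ?_
      have hmem : z ∈ {u, v} ∩ E f ↔ z ∈ ({u, v} : Finset V).filter (fun z => c z = F z + 1) := by
        rw [hct]
      simpa only [mem_inter, mem_filter, hz, true_and, hE f z hzs] using hmem
    refine hxy f hf ⟨?_, ?_⟩
    · simpa [c] using hfc u (by simp)
    · simpa [c, Ne.symm huv] using hfc v (by simp)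
  calc #𝒞 = #(𝒞.image E) := (card_image_of_injOn hEinj).symm
    _ ≤ #s + 1 := card_le_card_add_one_of_not_shatters_pair (fun _ ht => by
        obtain ⟨f, -, rfl⟩ := mem_image.1 ht; exact filter_subset _ _) hshatter

section FullCoverOfComplete

variable {V : Type*} [Fintype V] {H : SimpleGraph (V × Fin 3)}

theorem card_filter_dpColorings_apply_eq_le (hH : IsFullDPCover (⊤ : SimpleGraph V) 3 H)
    (w : V) (i : Fin 3) : #((dpColorings 3 H).filter fun f => f w = i) ≤ Fintype.card V := by
  have hF : ∀ v, ∃ c, (v = w → c = i) ∧ (v ≠ w → H.Adj (w, i) (v, c)) := by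
    intro v
    by_cases hv : v = w
    · exact ⟨i, fun _ => rfl, fun h => absurd hv h⟩
    · obtain ⟨c, hc, -⟩ := hH.2 w v (Ne.symm hv) i
      exact ⟨c, fun h => absurd h hv, fun _ => hc⟩
  choose F hFw hFadj using hF
  have hcol : ∀ f ∈ (dpColorings 3 H).filter fun f => f w = i,
      f w = i ∧ ∀ u v, u ≠ v → ¬ H.Adj (u, f u) (v, f v) := by
    intro f hf
    simp only [dpColorings, mem_filter, mem_univ, true_and] at hf
    exact ⟨hf.2, hf.1⟩
  calc _ ≤ #(univ.erase w) + 1 := by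
        refine card_le_of_omits_allowed_pair F _ _ (fun f hf v hv => ?_) (fun f hf v hv hfv => ?_)
          (fun u hu v hv huv => ?_)
        · obtain rfl : v = w := by simpa using hv
          rw [hFw v rfl, (hcol f hf).1]
        · have hvw := ne_of_mem_erase hv
          exact (hcol f hf).2 w v (Ne.symm hvw) ((hcol f hf).1 ▸ hfv ▸ hFadj v hvw)
        · obtain ⟨x, y, hx, hy, hxy⟩ := hH.exists_adj_avoiding le_rfl (G := ⊤) huv (F u) (F v)
          exact ⟨x, y, hx, hy, fun f hf ⟨hfu, hfv⟩ => (hcol f hf).2 u v huv (hfu ▸ hfv ▸ hxy)⟩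
    _ = Fintype.card V := card_erase_add_one (mem_univ w)

theorem card_dpColorings_le [Nonempty V] (hH : IsFullDPCover (⊤ : SimpleGraph V) 3 H) :
    #(dpColorings 3 H) ≤ 3 * Fintype.card V := by
  obtain ⟨w⟩ := ‹Nonempty V›
  calc #(dpColorings 3 H) = ∑ i : Fin 3, #((dpColorings 3 H).filter fun f => f w = i) :=
        card_eq_sum_card_fiberwise fun _ _ => mem_univ _
    _ ≤ ∑ _i : Fin 3, Fintype.card V :=
        sum_le_sum fun i _ => card_filter_dpColorings_apply_eq_le hH w i
    _ = 3 * Fintype.card V := by simp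

end FullCoverOfComplete

theorem dualDPColorFn_top_three_le (V : Type*) [Fintype V] [Nonempty V] :
    dualDPColorFn (⊤ : SimpleGraph V) 3 ≤ 3 * Fintype.card V := by
  refine csSup_le' ?_
  rintro _ ⟨H, hH, rfl⟩
  rw [dpCount_eq_card_dpColorings]
  exact card_dpColorings_le hH

def swapCover (V : Type*) : SimpleGraph (V × Fin 2) :=
  (⊤ : SimpleGraph (Fin 2)).comap Prod.snd

@[simp]
theorem swapCover_adj {V : Type*} {p q : V × Fin 2} : (swapCover V).Adj p q ↔ p.2 ≠ q.2 :=
  Iff.rfl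

theorem swapCover_isFullDPCover (V : Type*) :
    IsFullDPCover (⊤ : SimpleGraph V) 2 (swapCover V) := by
  refine ⟨⟨fun _ _ _ => id, fun u v _ _ _ => (em (u = v)).imp_right id, fun _ _ _ => ⟨?_, ?_⟩⟩,
    fun _ _ _ i => ⟨i + 1, ?_, ?_⟩⟩ <;> simp only [swapCover_adj] <;> omega

theorem dpCount_swapCover (V : Type*) [Nonempty V] : dpCount 2 (swapCover V) = 2 := by
  obtain ⟨v₀⟩ := ‹Nonempty V›
  have e : {f : V → Fin 2 // ∀ u v, u ≠ v → ¬ (swapCover V).Adj (u, f u) (v, f v)} ≃ Fin 2 :=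
    { toFun := fun f => f.1 v₀
      invFun := fun c => ⟨fun _ => c, fun _ _ _ => by simp⟩
      left_inv := fun f => Subtype.ext <| funext fun v => by
        by_contra h
        exact f.2 v₀ v (fun hv => h (hv ▸ rfl)) (by simpa using h)
      right_inv := fun _ => rfl }
  rw [dpCount, Nat.card_congr e, Nat.card_fin]

theorem two_le_dualDPColorFn_top_two (V : Type*) [Finite V] [Nonempty V] :
    2 ≤ dualDPColorFn (⊤ : SimpleGraph V) 2 := by
  refine le_csSup ⟨Nat.card (V → Fin 2), ?_⟩ ⟨swapCover V, swapCover_isFullDPCover V, ?_⟩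
  · rintro _ ⟨H, -, rfl⟩
    exact Finite.card_subtype_le _
  · rw [dpCount_swapCover]

theorem three_mul_mul_two_pow_lt (n : ℕ) (hn : 5 ≤ n) : 3 * n * 2 ^ n < 2 * 3 ^ n := by
  induction n, hn using Nat.le_induction with
  | base => norm_num
  | succ m hm ih =>
    rw [pow_succ, pow_succ]
    nlinarith [Nat.zero_le (2 ^ m)]

theorem stmt7 (n : ℕ) (hn : 5 ≤ n) :
    (dualDPColorFn (⊤ : SimpleGraph (Fin n)) 3 : ℝ) / 3 ^ n <
      (dualDPColorFn (⊤ : SimpleGraph (Fin n)) 2 : ℝ) / 2 ^ n := by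
  have : Nonempty (Fin n) := ⟨⟨0, by omega⟩⟩
  have hupper := dualDPColorFn_top_three_le (Fin n)
  have hlower := two_le_dualDPColorFn_top_two (Fin n)
  have hnum : (3 * n * 2 ^ n : ℝ) < 2 * 3 ^ n := by exact_mod_cast three_mul_mul_two_pow_lt n hn
  rw [Fintype.card_fin] at hupper
  calc (dualDPColorFn (⊤ : SimpleGraph (Fin n)) 3 : ℝ) / 3 ^ n ≤ 3 * n / 3 ^ n := by
        gcongr; exact_mod_cast hupper
    _ < 2 / 2 ^ n := by rw [div_lt_div_iff₀ (by positivity) (by positivity)]; linarith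
    _ ≤ (dualDPColorFn (⊤ : SimpleGraph (Fin n)) 2 : ℝ) / 2 ^ n := by
        gcongr; exact_mod_cast hlower
end

section
/- For every odd n ≥ 3 and every k ≥ 2, P*_DP(C_n, k) = (k−1)^n + 1, and this strictly exceeds P(C_n, k) = (k−1)^n − (k−1) when k ≥ 3. -/
/-!
A full `k`-fold DP-cover of the cycle `C_n` is determined by permutations `τ u` of `Fin k`, the
matching between the parts of `u` and `u + 1`, and its `H`-colorings are the maps `f` with
`f (u + 1) ≠ τ u (f u)` for all `u`. Cutting the cycle open at one edge, the colorings whose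
closing edge carries the twist `σ` are the twisted paths minus those with `f 0 = σ (f last)`, and
deleting the last vertex turns the latter into colorings of the shorter cycle with twist
`σ * τ last`. Induction gives `(k - 1) ^ n + (-1) ^ n * (fix ρ - 1)`, where `ρ` is the product of
all the `τ u` and `fix ρ` its number of fixed points. For odd `n` this is
`(k - 1) ^ n + 1 - fix ρ`, maximal when `ρ` is a derangement (one rotated edge), and with all
`τ u = 1` it is the chromatic polynomial.
-/

open scoped Classical

open SimpleGraph

lemma card_and_not_add_card_and {β : Type*} [Finite β] (p q : β → Prop) :
    Nat.card {x // p x ∧ ¬ q x} + Nat.card {x // p x ∧ q x} = Nat.card {x // p x} := by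
  have := Fintype.ofFinite β
  simp only [Nat.card_eq_fintype_card, Fintype.card_subtype]
  rw [add_comm, ← Finset.filter_filter, ← Finset.filter_filter]
  exact Finset.card_filter_add_card_filter_not _

lemma exists_perm_iff_eq_of_existsUnique {β : Type*} [Finite β] {r : β → β → Prop}
    (hex : ∀ i, ∃! j, r i j) (hinj : ∀ i i' j, r i j → r i' j → i = i') :
    ∃ e : Equiv.Perm β, ∀ i j, r i j ↔ j = e i := by
  choose g hg using fun i => (hex i).exists
  have hbij : g.Bijective := Finite.injective_iff_bijective.1
    fun i i' h => hinj i i' (g i) (hg i) (h ▸ hg i')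
  exact ⟨Equiv.ofBijective g hbij, fun i j => ⟨fun h => (hex i).unique h (hg i), fun h => h ▸ hg i⟩⟩

lemma card_fixedPoints_one {α : Type*} [Fintype α] :
    Nat.card (Function.fixedPoints (1 : Equiv.Perm α)) = Fintype.card α := by
  simp [Nat.card_eq_fintype_card]

lemma card_fixedPoints_finRotate (k : ℕ) :
    Nat.card (Function.fixedPoints (finRotate (k + 2))) = 0 := by
  simp [Function.fixedPoints, Function.IsFixedPt]

section TwistedColoring

variable {α : Type*}

def IsTwistedPath {m : ℕ} (τ : Fin m → Equiv.Perm α) (f : Fin (m + 1) → α) : Prop :=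
  ∀ j : Fin m, f j.succ ≠ τ j (f j.castSucc)

def IsTwistedColoring {n : ℕ} [NeZero n] (τ : Fin n → Equiv.Perm α) (f : Fin n → α) : Prop :=
  ∀ u, f (u + 1) ≠ τ u (f u)

/-- `holonomy τ = τ (m - 1) * ⋯ * τ 0`: where a colour is sent by following all the twists. -/
def holonomy : {m : ℕ} → (Fin m → Equiv.Perm α) → Equiv.Perm α
  | 0, _ => 1
  | _ + 1, τ => τ (Fin.last _) * holonomy (fun j => τ j.castSucc)

lemma holonomy_one {m : ℕ} : holonomy (fun _ : Fin m => (1 : Equiv.Perm α)) = 1 := by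
  induction m with
  | zero => rfl
  | succ m ih => simp [holonomy, ih]

lemma isTwistedPath_snoc_iff {m : ℕ} (τ : Fin (m + 1) → Equiv.Perm α)
    (g : Fin (m + 1) → α) (c : α) :
    IsTwistedPath τ (Fin.snoc g c : Fin (m + 2) → α) ↔
      IsTwistedPath (fun j => τ j.castSucc) g ∧ c ≠ τ (Fin.last m) (g (Fin.last m)) := by
  simp [IsTwistedPath, Fin.forall_fin_succ', -Fin.castSucc_succ, Fin.succ_castSucc, and_comm]

lemma isTwistedPath_iff_init {m : ℕ} (τ : Fin (m + 1) → Equiv.Perm α) (f : Fin (m + 2) → α) :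
    IsTwistedPath τ f ↔ IsTwistedPath (fun j => τ j.castSucc) (Fin.init f) ∧
      f (Fin.last _) ≠ τ (Fin.last m) (f (Fin.last m).castSucc) := by
  conv_lhs => rw [← Fin.snoc_init_self f]
  exact isTwistedPath_snoc_iff τ _ _

def twistedPathSnocEquiv {m : ℕ} (τ : Fin (m + 1) → Equiv.Perm α) :
    {f : Fin (m + 2) → α // IsTwistedPath τ f} ≃
      Σ g : {g : Fin (m + 1) → α // IsTwistedPath (fun j => τ j.castSucc) g},
        {c : α // c ≠ τ (Fin.last m) (g.1 (Fin.last m))} where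
  toFun f := ⟨⟨Fin.init f.1, ((isTwistedPath_iff_init τ f.1).1 f.2).1⟩,
    ⟨f.1 (Fin.last _), ((isTwistedPath_iff_init τ f.1).1 f.2).2⟩⟩
  invFun p := ⟨Fin.snoc p.1.1 p.2.1, (isTwistedPath_snoc_iff τ _ _).2 ⟨p.1.2, p.2.2⟩⟩
  left_inv f := by simp
  right_inv p := by ext <;> simp

lemma card_isTwistedPath_zero_and_eq (τ : Fin 0 → Equiv.Perm α) (σ : Equiv.Perm α) :
    Nat.card {f // IsTwistedPath τ f ∧ f 0 = σ (f (Fin.last 0))} =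
      Nat.card (Function.fixedPoints σ) :=
  Nat.card_congr
    { toFun f := ⟨f.1 0, f.2.2.symm⟩
      invFun x := ⟨fun _ => x.1, fun j => j.elim0, x.2.symm⟩
      left_inv f := by ext i; rw [Fin.fin_one_eq_zero i]
      right_inv x := rfl }

lemma card_isTwistedPath_succ_and_eq {m : ℕ} (τ : Fin (m + 1) → Equiv.Perm α)
    (σ : Equiv.Perm α) :
    Nat.card {f // IsTwistedPath τ f ∧ f 0 = σ (f (Fin.last _))} =
      Nat.card {g // IsTwistedPath (fun j => τ j.castSucc) g ∧
        g 0 ≠ (σ * τ (Fin.last m)) (g (Fin.last m))} :=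
  Nat.card_congr
    { toFun f := ⟨Fin.init f.1, by
        obtain ⟨hf, hf0⟩ := f.2
        rw [isTwistedPath_iff_init, ← σ.symm_apply_eq.2 hf0] at hf
        simpa [Fin.init, Equiv.symm_apply_eq] using hf⟩
      invFun g := ⟨Fin.snoc g.1 (σ.symm (g.1 0)), by
        refine ⟨(isTwistedPath_snoc_iff τ _ _).2 ⟨g.2.1, ?_⟩, ?_⟩
        · simpa [Equiv.symm_apply_eq] using g.2.2
        · simp⟩
      left_inv f := by
        ext1
        conv_rhs => rw [← Fin.snoc_init_self f.1]
        simp [Fin.init, f.2.2]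
      right_inv g := by ext1; simp }

lemma isTwistedColoring_iff {m : ℕ} (τ : Fin (m + 1) → Equiv.Perm α) (f : Fin (m + 1) → α) :
    IsTwistedColoring τ f ↔
      IsTwistedPath (fun j => τ j.castSucc) f ∧ f 0 ≠ τ (Fin.last m) (f (Fin.last m)) := by
  simp [IsTwistedColoring, IsTwistedPath, Fin.forall_fin_succ', Fin.coeSucc_eq_succ]

variable [Fintype α]

lemma card_isTwistedPath {m : ℕ} (τ : Fin m → Equiv.Perm α) :
    Nat.card {f // IsTwistedPath τ f} = Fintype.card α * (Fintype.card α - 1) ^ m := by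
  induction m with
  | zero => simp [IsTwistedPath, Nat.card_eq_fintype_card]
  | succ m ih =>
    rw [Nat.card_congr (twistedPathSnocEquiv τ), Nat.card_sigma]
    simp only [Nat.card_eq_fintype_card, Fintype.card_subtype_compl, Fintype.card_unique,
      Finset.sum_const, Finset.card_univ, smul_eq_mul]
    rw [← Nat.card_eq_fintype_card, ih, pow_succ, mul_assoc]

lemma card_isTwistedPath_and_ne_add_card_and_eq {m : ℕ} (τ : Fin m → Equiv.Perm α)
    (σ : Equiv.Perm α) :
    (Nat.card {f // IsTwistedPath τ f ∧ f 0 ≠ σ (f (Fin.last m))} : ℤ) +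
        Nat.card {f // IsTwistedPath τ f ∧ f 0 = σ (f (Fin.last m))} =
      Fintype.card α * ((Fintype.card α : ℤ) - 1) ^ m := by
  rw [← Nat.cast_add, card_and_not_add_card_and, card_isTwistedPath]
  cases Fintype.card α <;> simp

theorem card_isTwistedPath_and_ne {m : ℕ} (τ : Fin m → Equiv.Perm α) (σ : Equiv.Perm α) :
    (Nat.card {f // IsTwistedPath τ f ∧ f 0 ≠ σ (f (Fin.last m))} : ℤ) =
      ((Fintype.card α : ℤ) - 1) ^ (m + 1) +
        (-1) ^ (m + 1) * (Nat.card (Function.fixedPoints (σ * holonomy τ)) - 1) := by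
  induction m generalizing σ with
  | zero =>
    have hsplit := card_isTwistedPath_and_ne_add_card_and_eq τ σ
    rw [card_isTwistedPath_zero_and_eq] at hsplit
    simp only [holonomy, mul_one]
    linear_combination hsplit
  | succ m ih =>
    have hsplit := card_isTwistedPath_and_ne_add_card_and_eq τ σ
    rw [card_isTwistedPath_succ_and_eq] at hsplit
    have hshorter := ih (fun j => τ j.castSucc) (σ * τ (Fin.last m))
    rw [mul_assoc] at hshorter
    simp only [holonomy]
    linear_combination hsplit - hshorter

theorem card_isTwistedColoring {m : ℕ} (τ : Fin (m + 1) → Equiv.Perm α) :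
    (Nat.card {f // IsTwistedColoring τ f} : ℤ) =
      ((Fintype.card α : ℤ) - 1) ^ (m + 1) +
        (-1) ^ (m + 1) * (Nat.card (Function.fixedPoints (holonomy τ)) - 1) := by
  simp_rw [isTwistedColoring_iff]
  exact card_isTwistedPath_and_ne _ _

end TwistedColoring

section DPCover

variable {V : Type*} {G : SimpleGraph V} {k : ℕ} {H : SimpleGraph (V × Fin k)}

lemma IsFullDPCover.exists_perm (hH : IsFullDPCover G k H) {u v : V} (huv : G.Adj u v) :
    ∃ e : Equiv.Perm (Fin k), ∀ i j, H.Adj (u, i) (v, j) ↔ j = e i :=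
  exists_perm_iff_eq_of_existsUnique (hH.2 u v huv) (hH.1.2.2 u v huv).2

lemma isFullDPCover_of_perm (hpart : ∀ v i j, i ≠ j → H.Adj (v, i) (v, j))
    (hcross : ∀ u v i j, H.Adj (u, i) (v, j) → u = v ∨ G.Adj u v)
    (hmatch : ∀ u v, G.Adj u v → ∃ e : Equiv.Perm (Fin k), ∀ i j, H.Adj (u, i) (v, j) ↔ j = e i) :
    IsFullDPCover G k H := by
  refine ⟨⟨hpart, hcross, fun u v huv => ?_⟩, fun u v huv i => ?_⟩ <;>
    obtain ⟨e, he⟩ := hmatch u v huv <;> simp only [he]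
  · exact ⟨fun i j j' hj hj' => hj.trans hj'.symm,
      fun i i' j hi hi' => e.injective (hi.symm.trans hi')⟩
  · exact ⟨e i, rfl, fun _ h => h⟩

end DPCover

lemma cycleGraph_adj_iff {n : ℕ} {u v : Fin (n + 2)} :
    (cycleGraph (n + 2)).Adj u v ↔ v = u + 1 ∨ u = v + 1 := by
  rw [cycleGraph_adj, sub_eq_iff_eq_add, sub_eq_iff_eq_add, add_comm 1, add_comm 1, or_comm]

lemma cycleGraph_adj_add_one {n : ℕ} (u : Fin (n + 2)) : (cycleGraph (n + 2)).Adj u (u + 1) :=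
  cycleGraph_adj_iff.2 (Or.inl rfl)

lemma dpCount_eq_card_isTwistedColoring {n k : ℕ} {H : SimpleGraph (Fin (n + 2) × Fin k)}
    (hH : IsDPCover (cycleGraph (n + 2)) k H) (τ : Fin (n + 2) → Equiv.Perm (Fin k))
    (hτ : ∀ u i j, H.Adj (u, i) (u + 1, j) ↔ j = τ u i) :
    dpCount k H = Nat.card {f // IsTwistedColoring τ f} := by
  refine Nat.card_congr (Equiv.subtypeEquivRight fun f => ⟨fun hf u => ?_, fun hf u v huv => ?_⟩)
  · exact fun h => hf u (u + 1) (cycleGraph_adj_add_one u).ne ((hτ u _ _).2 h)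
  · intro hadj
    rcases hH.2.1 u v _ _ hadj with rfl | huv'
    · exact huv rfl
    rcases cycleGraph_adj_iff.1 huv' with rfl | rfl
    · exact hf u ((hτ u _ _).1 hadj)
    · exact hf v ((hτ v _ _).1 hadj.symm)

theorem exists_dpCount_eq_card_isTwistedColoring {n k : ℕ}
    {H : SimpleGraph (Fin (n + 2) × Fin k)} (hH : IsFullDPCover (cycleGraph (n + 2)) k H) :
    ∃ τ : Fin (n + 2) → Equiv.Perm (Fin k), dpCount k H = Nat.card {f // IsTwistedColoring τ f} := by
  choose τ hτ using fun u => hH.exists_perm (cycleGraph_adj_add_one u)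
  exact ⟨τ, dpCount_eq_card_isTwistedColoring hH.1 τ hτ⟩

def twistedCover {n k : ℕ} [NeZero n] (τ : Fin n → Equiv.Perm (Fin k)) :
    SimpleGraph (Fin n × Fin k) :=
  SimpleGraph.fromRel fun p q => p.1 = q.1 ∨ (q.1 = p.1 + 1 ∧ q.2 = τ p.1 p.2)

/-- On a cycle of length at least `3` the edges `u ~ u + 1` and `u + 1 ~ u + 2` are distinct,
so the matching along `u ~ u + 1` is exactly `τ u`. -/
lemma twistedCover_adj_add_one {n k : ℕ} (τ : Fin (n + 3) → Equiv.Perm (Fin k))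
    (u : Fin (n + 3)) (i j : Fin k) : (twistedCover τ).Adj (u, i) (u + 1, j) ↔ j = τ u i := by
  have h1 : u ≠ u + 1 := by simp
  have h2 : u ≠ u + 1 + 1 := by
    rw [add_assoc, Ne, left_eq_add, Fin.ext_iff]
    show (1 + 1) % (n + 3) ≠ 0
    rw [Nat.mod_eq_of_lt (by omega)]
    omega
  simp [twistedCover, h1, h2, h1.symm]

theorem isFullDPCover_twistedCover {n k : ℕ} (τ : Fin (n + 3) → Equiv.Perm (Fin k)) :
    IsFullDPCover (cycleGraph (n + 3)) k (twistedCover τ) := by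
  refine isFullDPCover_of_perm (fun v i j hij => ?_) (fun u v i j h => ?_) (fun u v huv => ?_)
  · simp [twistedCover, hij]
  · simp only [twistedCover, fromRel_adj] at h
    rcases h.2 with (h | ⟨h, -⟩) | (h | ⟨h, -⟩)
    · exact Or.inl h
    · exact Or.inr (cycleGraph_adj_iff.2 (Or.inl h))
    · exact Or.inl h.symm
    · exact Or.inr (cycleGraph_adj_iff.2 (Or.inr h))
  · rcases cycleGraph_adj_iff.1 huv with rfl | rfl
    · exact ⟨τ u, twistedCover_adj_add_one τ u⟩
    · refine ⟨(τ v).symm, fun i j => ?_⟩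
      rw [(twistedCover τ).adj_comm, twistedCover_adj_add_one, Equiv.eq_symm_apply, eq_comm]

lemma dpCount_twistedCover {n k : ℕ} (τ : Fin (n + 3) → Equiv.Perm (Fin k)) :
    dpCount k (twistedCover τ) = Nat.card {f // IsTwistedColoring τ f} :=
  dpCount_eq_card_isTwistedColoring (isFullDPCover_twistedCover τ).1 τ
    (twistedCover_adj_add_one τ)

lemma properCount_cycleGraph_eq_card_isTwistedColoring {n k : ℕ} :
    properCount (cycleGraph (n + 2)) k =
      Nat.card {f // IsTwistedColoring (fun _ : Fin (n + 2) => (1 : Equiv.Perm (Fin k))) f} := by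
  refine Nat.card_congr (Equiv.subtypeEquivRight fun f => ⟨fun hf u => ?_, fun hf u v huv => ?_⟩)
  · exact (hf u (u + 1) (cycleGraph_adj_add_one u)).symm
  · rcases cycleGraph_adj_iff.1 huv with rfl | rfl
    · exact (hf u).symm
    · exact hf v

theorem properCount_cycleGraph (n k : ℕ) :
    (properCount (cycleGraph (n + 2)) k : ℤ) =
      ((k : ℤ) - 1) ^ (n + 2) + (-1) ^ (n + 2) * (k - 1) := by
  rw [properCount_cycleGraph_eq_card_isTwistedColoring, card_isTwistedColoring, holonomy_one,
    card_fixedPoints_one, Fintype.card_fin]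

theorem dualDPColorFn_cycleGraph_of_odd {n k : ℕ} (hodd : Odd (n + 3)) (hk : 2 ≤ k) :
    dualDPColorFn (cycleGraph (n + 3)) k = (k - 1) ^ (n + 3) + 1 := by
  obtain ⟨k, rfl⟩ : ∃ k', k = k' + 2 := ⟨k - 2, by omega⟩
  change _ = (k + 1) ^ (n + 3) + 1
  have hcount (τ : Fin (n + 3) → Equiv.Perm (Fin (k + 2))) :
      Nat.card {f // IsTwistedColoring τ f} + Nat.card (Function.fixedPoints (holonomy τ)) =
        (k + 1) ^ (n + 3) + 1 := by
    have h := card_isTwistedColoring τ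
    rw [hodd.neg_one_pow, Fintype.card_fin] at h
    push_cast at h
    zify
    linear_combination h
  set τ₀ : Fin (n + 3) → Equiv.Perm (Fin (k + 2)) := Fin.snoc (fun _ => 1) (finRotate (k + 2))
  have hτ₀ : holonomy τ₀ = finRotate (k + 2) := by simp [τ₀, holonomy, holonomy_one]
  refine IsGreatest.csSup_eq ⟨⟨twistedCover τ₀, isFullDPCover_twistedCover τ₀, ?_⟩, ?_⟩
  · rw [dpCount_twistedCover, ← hcount τ₀, hτ₀, card_fixedPoints_finRotate, add_zero]
  · rintro _ ⟨H, hH, rfl⟩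
    obtain ⟨τ, hτ⟩ := exists_dpCount_eq_card_isTwistedColoring hH
    rw [hτ, ← hcount τ]
    exact Nat.le_add_right _ _

theorem stmt17 (n k : ℕ) (hn : 3 ≤ n) (hodd : Odd n) (hk : 2 ≤ k) :
    dualDPColorFn (SimpleGraph.cycleGraph n) k = (k - 1) ^ n + 1 ∧
    properCount (SimpleGraph.cycleGraph n) k = (k - 1) ^ n - (k - 1) ∧
    (3 ≤ k →
      properCount (SimpleGraph.cycleGraph n) k <
        dualDPColorFn (SimpleGraph.cycleGraph n) k) := by
  obtain ⟨n, rfl⟩ : ∃ m, n = m + 3 := ⟨n - 3, by omega⟩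
  have hdual := dualDPColorFn_cycleGraph_of_odd hodd hk
  have hproper : properCount (cycleGraph (n + 3)) k = (k - 1) ^ (n + 3) - (k - 1) := by
    have h := properCount_cycleGraph (n + 1) k
    rw [hodd.neg_one_pow] at h
    have hle : k - 1 ≤ (k - 1) ^ (n + 3) := Nat.le_self_pow (by omega) _
    zify [hle, show 1 ≤ k by omega]
    linear_combination h
  refine ⟨hdual, hproper, fun _ => ?_⟩
  rw [hproper, hdual]
  omega
end

section
/- For every even n ≥ 4 and every k ≥ 2, P_DP(C_n, k) = (k−1)^n − 1, which is strictly less than P(C_n, k) = (k−1)^n + (k−1). -/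
open scoped Classical

/-!
A DP-cover of the cycle `C_n` (`n ≥ 3`) lies inside a full cover given by a permutation `σ i` of
the colours on each edge `i → i + 1`, and deleting cover edges only adds colourings. So
`P_DP(C_n, k)` is the least number of maps `f` with `f (i + 1) ≠ σ i (f i)` for all `i`.
Deletion–contraction on the closing edge of the path `0 → ⋯ → n - 1` shows that this number is
`(k - 1)^n + (-1)^n (fix π - 1)`, where `π = σ (n - 1) ⋯ σ 0` is the monodromy around the cycle.
For even `n` it is smallest when `π` has no fixed point (e.g. a rotation on a single edge), giving
`(k - 1)^n - 1`, while `σ = 1` gives the chromatic polynomial `(k - 1)^n + (k - 1)`.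
-/

open Equiv Finset SimpleGraph

theorem Nat.card_subtype_prod_eq_mul {β γ : Type*} [Finite β] [Finite γ] (P : β → Prop)
    (Q : β → γ → Prop) {c : ℕ} (hQ : ∀ b, P b → Nat.card {x // Q b x} = c) :
    Nat.card {p : β × γ // P p.1 ∧ Q p.1 p.2} = Nat.card {b // P b} * c := by
  have := Fintype.ofFinite β
  let e : {p : β × γ // P p.1 ∧ Q p.1 p.2} ≃ Σ b : {b // P b}, {x // Q b x} :=
    { toFun := fun p => ⟨⟨p.1.1, p.2.1⟩, p.1.2, p.2.2⟩
      invFun := fun s => ⟨(s.1.1, s.2.1), s.1.2, s.2.2⟩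
      left_inv := fun _ => rfl
      right_inv := fun _ => rfl }
  rw [Nat.card_congr e, Nat.card_sigma, Finset.sum_congr rfl fun b _ => hQ b.1 b.2,
    sum_const, Finset.card_univ, ← Nat.card_eq_fintype_card, smul_eq_mul]

theorem Nat.card_subtype_prod_and_eq {β γ : Type*} (P : β → γ → Prop) (h : β → γ) :
    Nat.card {p : β × γ // P p.1 p.2 ∧ p.2 = h p.1} = Nat.card {b // P b (h b)} :=
  Nat.card_congr
    { toFun := fun p => ⟨p.1.1, p.2.2 ▸ p.2.1⟩
      invFun := fun b => ⟨(b.1, h b.1), b.2, rfl⟩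
      left_inv := fun p => Subtype.ext (Prod.ext rfl p.2.2.symm)
      right_inv := fun _ => rfl }

theorem Nat.card_subtype_eq_card_and_add_card_and_not {β : Type*} [Finite β] (P Q : β → Prop) :
    Nat.card {b // P b} = Nat.card {b // P b ∧ Q b} + Nat.card {b // P b ∧ ¬Q b} := by
  have := Fintype.ofFinite β
  simp only [Nat.card_eq_fintype_card]
  rw [← Fintype.card_subtype_or_disjoint]
  · exact Fintype.card_congr (Equiv.subtypeEquivRight fun b => by tauto)
  · exact disjoint_iff_inf_le.mpr fun b ⟨⟨_, hq⟩, _, hnq⟩ => hnq hq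

theorem Fin.card_subtype_snoc {α : Type*} {m : ℕ} (P : (Fin (m + 1) → α) → Prop) :
    Nat.card {f // P f} = Nat.card {p : (Fin m → α) × α // P (Fin.snoc p.1 p.2)} :=
  Nat.card_congr (((Equiv.prodComm _ _).trans (Fin.snocEquiv fun _ => α)).subtypeEquiv
    fun _ => Iff.rfl).symm

theorem Nat.card_subtype_ne {α : Type*} [Fintype α] (x : α) :
    Nat.card {a // a ≠ x} = Fintype.card α - 1 := by
  rw [Nat.card_eq_fintype_card, Fintype.card_subtype_compl, Fintype.card_subtype_eq]

namespace Fin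

variable {n : ℕ} [NeZero n]

theorem add_one_ne_self (hn : 2 ≤ n) (u : Fin n) : u + 1 ≠ u := by
  rw [Ne, add_eq_left, Fin.ext_iff, Fin.val_one', Fin.val_zero, Nat.mod_eq_of_lt (by omega)]
  omega

theorem add_one_add_one_ne_self (hn : 3 ≤ n) (u : Fin n) : u + 1 + 1 ≠ u := by
  rw [add_assoc, Ne, add_eq_left, Fin.ext_iff, Fin.val_add, Fin.val_one', Fin.val_zero,
    Nat.mod_eq_of_lt (by omega : 1 < n), Nat.mod_eq_of_lt (by omega : 1 + 1 < n)]
  omega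

end Fin

theorem Equiv.Perm.exists_extend_of_matching {α : Type*} [Fintype α] (R : α → α → Prop)
    (hfun : ∀ a b b', R a b → R a b' → b = b') (hinj : ∀ a a' b, R a b → R a' b → a = a') :
    ∃ τ : Perm α, ∀ a b, R a b → τ a = b := by
  let f : α → α := fun a => if h : ∃ b, R a b then h.choose else a
  have hf : ∀ a b, R a b → f a = b := fun a b h => by
    simp only [f, dif_pos (⟨b, h⟩ : ∃ b, R a b)]
    exact hfun _ _ _ (Exists.choose_spec _) h
  obtain ⟨g, hg⟩ := Set.MapsTo.exists_equiv_extend_of_card_eq (t := univ)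
    (s := {a | ∃ b, R a b}) (f := f) card_univ.symm (fun _ _ => mem_coe.2 (mem_univ _))
    fun a ⟨b, hb⟩ a' ⟨b', hb'⟩ h => hinj a a' b hb (by rwa [← hf a' b' hb', ← h, hf a b hb] at hb')
  exact ⟨g.trans (Equiv.subtypeUnivEquiv mem_univ), fun a b h => (hg a ⟨b, h⟩).trans (hf a b h)⟩

section PermColorings

variable {α : Type*}

def IsPermPathColoring {m : ℕ} (σ : Fin m → Perm α) (f : Fin (m + 1) → α) : Prop :=
  ∀ i : Fin m, f i.succ ≠ σ i (f i.castSucc)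

def IsPermCycleColoring {n : ℕ} [NeZero n] (σ : Fin n → Perm α) (f : Fin n → α) : Prop :=
  ∀ i, f (i + 1) ≠ σ i (f i)

-- `σ (m - 1) * ⋯ * σ 1 * σ 0`
def monodromy {m : ℕ} (σ : Fin m → Perm α) : Perm α := (List.ofFn σ).reverse.prod

theorem monodromy_succ {m : ℕ} (σ : Fin (m + 1) → Perm α) :
    monodromy σ = σ (Fin.last m) * monodromy (Fin.init σ) := by
  rw [monodromy, List.ofFn_succ', List.concat_eq_append, List.reverse_concat, List.prod_cons]
  rfl

theorem monodromy_one {m : ℕ} : monodromy (1 : Fin m → Perm α) = 1 := by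
  simp [monodromy, Pi.one_def]

theorem isPermPathColoring_snoc {m : ℕ} {σ : Fin (m + 1) → Perm α} {g : Fin (m + 1) → α}
    {a : α} : IsPermPathColoring σ (Fin.snoc g a : Fin (m + 2) → α) ↔
      IsPermPathColoring (Fin.init σ) g ∧ a ≠ σ (Fin.last m) (g (Fin.last m)) := by
  simp only [IsPermPathColoring, Fin.forall_fin_succ' (n := m), Fin.succ_last, Fin.snoc_last]
  simp only [Fin.succ_castSucc, Fin.snoc_castSucc, Fin.init]

theorem isPermCycleColoring_iff {m : ℕ} {σ : Fin (m + 1) → Perm α} {f : Fin (m + 1) → α} :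
    IsPermCycleColoring σ f ↔
      IsPermPathColoring (Fin.init σ) f ∧ f 0 ≠ σ (Fin.last m) (f (Fin.last m)) := by
  rw [IsPermCycleColoring, Fin.forall_fin_succ']
  simp only [Fin.coeSucc_eq_succ, Fin.last_add_one]
  rfl

-- Contracting the closing edge: the last colour is forced to be `π⁻¹ (f 0)`.
theorem card_isPermPathColoring_and_eq {m : ℕ} (σ : Fin (m + 1) → Perm α) (π : Perm α) :
    Nat.card {f : Fin (m + 2) → α //
        IsPermPathColoring σ f ∧ ¬f 0 ≠ π (f (Fin.last (m + 1)))} =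
      Nat.card {g : Fin (m + 1) → α //
        IsPermPathColoring (Fin.init σ) g ∧ g 0 ≠ (π * σ (Fin.last m)) (g (Fin.last m))} := by
  have hsnoc : ∀ p : (Fin (m + 1) → α) × α,
      (IsPermPathColoring σ (Fin.snoc p.1 p.2 : Fin (m + 2) → α) ∧
        ¬(Fin.snoc p.1 p.2 : Fin (m + 2) → α) 0 ≠
          π ((Fin.snoc p.1 p.2 : Fin (m + 2) → α) (Fin.last (m + 1)))) ↔
      (IsPermPathColoring (Fin.init σ) p.1 ∧ p.2 ≠ σ (Fin.last m) (p.1 (Fin.last m))) ∧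
        p.2 = π⁻¹ (p.1 0) := fun p => by
    rw [isPermPathColoring_snoc, Perm.eq_inv_iff_eq, ← Fin.castSucc_zero, Fin.snoc_castSucc,
      Fin.snoc_last, not_not, eq_comm]
  rw [Fin.card_subtype_snoc, Nat.card_congr (Equiv.subtypeEquivRight hsnoc),
    Nat.card_subtype_prod_and_eq (fun (g : Fin (m + 1) → α) a =>
      IsPermPathColoring (Fin.init σ) g ∧ a ≠ σ (Fin.last m) (g (Fin.last m))) fun g => π⁻¹ (g 0)]
  refine Nat.card_congr (Equiv.subtypeEquivRight fun g => and_congr_right fun _ => ?_)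
  rw [Perm.mul_apply, Ne, Perm.inv_eq_iff_eq]

variable [Fintype α]

theorem card_isPermPathColoring {m : ℕ} (σ : Fin m → Perm α) :
    Nat.card {f // IsPermPathColoring σ f} = Fintype.card α * (Fintype.card α - 1) ^ m := by
  induction m with
  | zero => simp [IsPermPathColoring, Nat.card_eq_fintype_card]
  | succ m ih =>
    simp only [Fin.card_subtype_snoc, isPermPathColoring_snoc]
    rw [Nat.card_subtype_prod_eq_mul _
      (fun (g : Fin (m + 1) → α) a => a ≠ σ (Fin.last m) (g (Fin.last m)))
      fun g _ => Nat.card_subtype_ne _, ih, pow_succ, mul_assoc]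

variable [DecidableEq α]

theorem card_isPermPathColoring_and_ne [Nonempty α] {m : ℕ} (σ : Fin m → Perm α) (π : Perm α) :
    (Nat.card {f : Fin (m + 1) → α // IsPermPathColoring σ f ∧ f 0 ≠ π (f (Fin.last m))} : ℤ) =
      (Fintype.card α - 1) ^ (m + 1) +
        (-1) ^ m * (#(π * monodromy σ).support - (Fintype.card α - 1)) := by
  induction m generalizing π with
  | zero =>
    have hsupport :
        Nat.card {f : Fin 1 → α // IsPermPathColoring σ f ∧ f 0 ≠ π (f (Fin.last 0))} =
        #π.support := by
      rw [← Nat.card_eq_finsetCard]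
      refine Nat.card_congr ((Equiv.funUnique (Fin 1) α).subtypeEquiv fun f => ?_)
      simp [IsPermPathColoring, Perm.mem_support, eq_comm]
    rw [hsupport]
    simp [monodromy]
  | succ m ih =>
    have hsplit := Nat.card_subtype_eq_card_and_add_card_and_not (IsPermPathColoring σ)
      fun f : Fin (m + 2) → α => f 0 ≠ π (f (Fin.last (m + 1)))
    rw [card_isPermPathColoring, card_isPermPathColoring_and_eq] at hsplit
    have hq : 1 ≤ Fintype.card α := Fintype.card_pos
    have hcast := congrArg (Nat.cast (R := ℤ)) hsplit
    simp only [Nat.cast_add, Nat.cast_mul, Nat.cast_pow, Nat.cast_sub hq, Nat.cast_one] at hcast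
    have hcontract := ih (Fin.init σ) (π * σ (Fin.last m))
    rw [mul_assoc, ← monodromy_succ] at hcontract
    linear_combination -hcast - hcontract

variable [Nonempty α] {m : ℕ} (hm : Even (m + 1))
include hm

theorem card_isPermCycleColoring_of_even (σ : Fin (m + 1) → Perm α) :
    (Nat.card {f // IsPermCycleColoring σ f} : ℤ) =
      (Fintype.card α - 1) ^ (m + 1) + (Fintype.card α - 1) - #(monodromy σ).support := by
  rw [Nat.card_congr (Equiv.subtypeEquivRight fun _ => isPermCycleColoring_iff),
    card_isPermPathColoring_and_ne, ← monodromy_succ,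
    (Nat.not_even_iff_odd.mp (Nat.even_add_one.mp hm)).neg_one_pow]
  ring

theorem sub_one_le_card_isPermCycleColoring (σ : Fin (m + 1) → Perm α) :
    (Fintype.card α - 1) ^ (m + 1) - 1 ≤ Nat.card {f // IsPermCycleColoring σ f} := by
  have hcount := card_isPermCycleColoring_of_even hm σ
  have hsupport : #(monodromy σ).support ≤ Fintype.card α := card_le_univ _
  have hq : 1 ≤ Fintype.card α := Fintype.card_pos
  rw [Nat.sub_le_iff_le_add, ← Nat.cast_le (α := ℤ)]
  push_cast [Nat.cast_sub hq]
  linarith [(Nat.cast_le (α := ℤ)).mpr hsupport]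

theorem card_isPermCycleColoring_one :
    Nat.card {f // IsPermCycleColoring (1 : Fin (m + 1) → Perm α) f} =
      (Fintype.card α - 1) ^ (m + 1) + (Fintype.card α - 1) := by
  have hcount := card_isPermCycleColoring_of_even hm (1 : Fin (m + 1) → Perm α)
  rw [monodromy_one, Perm.support_one, card_empty, Nat.cast_zero, sub_zero] at hcount
  have hq : 1 ≤ Fintype.card α := Fintype.card_pos
  zify [hq]
  exact hcount

theorem card_isPermCycleColoring_snoc_one {τ : Perm α} (hτ : τ.support = univ) :
    Nat.card {f // IsPermCycleColoring (Fin.snoc (1 : Fin m → Perm α) τ) f} =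
      (Fintype.card α - 1) ^ (m + 1) - 1 := by
  have hcount := card_isPermCycleColoring_of_even hm (Fin.snoc (1 : Fin m → Perm α) τ)
  rw [monodromy_succ, Fin.init_snoc, Fin.snoc_last, monodromy_one, mul_one, hτ, card_univ]
    at hcount
  have hq : 1 ≤ Fintype.card α := Fintype.card_pos
  have hsucc : Nat.card {f // IsPermCycleColoring (Fin.snoc (1 : Fin m → Perm α) τ) f} + 1 =
      (Fintype.card α - 1) ^ (m + 1) := by
    zify [hq]
    linarith
  omega

end PermColorings

theorem dpCount_antitone {V : Type*} [Finite V] (k : ℕ) :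
    Antitone (dpCount k : SimpleGraph (V × Fin k) → ℕ) := fun _ _ hle =>
  Nat.card_le_card_of_injective (fun f => ⟨f.1, fun u v huv h => f.2 u v huv (hle h)⟩)
    fun _ _ h => Subtype.ext (congrArg Subtype.val h :)

section PermCover

variable {n : ℕ} [NeZero n]

theorem cycleGraph_adj_iff_eq_add_one (hn : 2 ≤ n) {u v : Fin n} :
    (cycleGraph n).Adj u v ↔ v = u + 1 ∨ u = v + 1 := by
  obtain ⟨m, rfl⟩ : ∃ m, n = m + 2 := ⟨n - 2, by omega⟩
  rw [cycleGraph_adj, sub_eq_iff_eq_add, sub_eq_iff_eq_add, add_comm 1 u, add_comm 1 v, or_comm]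

def permCover {α : Type*} (σ : Fin n → Perm α) : SimpleGraph (Fin n × α) :=
  fromRel fun p q => p.1 = q.1 ∨ (q.1 = p.1 + 1 ∧ q.2 = σ p.1 p.2)

theorem permCover_adj_of_ne {α : Type*} {σ : Fin n → Perm α} {u v : Fin n} {a b : α}
    (huv : u ≠ v) :
    (permCover σ).Adj (u, a) (v, b) ↔ (v = u + 1 ∧ b = σ u a) ∨ (u = v + 1 ∧ a = σ v b) := by
  simp [permCover, huv, Ne.symm huv]

variable {k : ℕ}

theorem isDPCover_permCover (hn : 3 ≤ n) (σ : Fin n → Perm (Fin k)) :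
    IsDPCover (cycleGraph n) k (permCover σ) := by
  refine ⟨fun v i j hij => (fromRel_adj _ _ _).2 ⟨by simpa using hij, Or.inl (Or.inl rfl)⟩,
    fun u v i j h => ?_, fun u v huv => ⟨?_, ?_⟩⟩
  · by_cases huv : u = v
    · exact Or.inl huv
    · rw [permCover_adj_of_ne huv] at h
      exact Or.inr ((cycleGraph_adj_iff_eq_add_one (by omega)).2 (h.imp And.left And.left))
  · rintro i j j' h h'
    rw [permCover_adj_of_ne huv.ne] at h h'
    rcases h with ⟨hv, rfl⟩ | ⟨hu, hi⟩ <;> rcases h' with ⟨hv', rfl⟩ | ⟨hu', hi'⟩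
    · rfl
    · exact absurd (hu' ▸ hv).symm (Fin.add_one_add_one_ne_self hn v)
    · exact absurd (hu ▸ hv').symm (Fin.add_one_add_one_ne_self hn v)
    · exact (σ v).injective (hi.symm.trans hi')
  · rintro i i' j h h'
    rw [permCover_adj_of_ne huv.ne] at h h'
    rcases h with ⟨hv, hj⟩ | ⟨hu, rfl⟩ <;> rcases h' with ⟨hv', hj'⟩ | ⟨hu', rfl⟩
    · exact (σ u).injective (hj.symm.trans hj')
    · exact absurd (hu' ▸ hv).symm (Fin.add_one_add_one_ne_self hn v)
    · exact absurd (hu ▸ hv').symm (Fin.add_one_add_one_ne_self hn v)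
    · rfl

theorem dpCount_permCover (hn : 2 ≤ n) (σ : Fin n → Perm (Fin k)) :
    dpCount k (permCover σ) = Nat.card {f // IsPermCycleColoring σ f} := by
  refine Nat.card_congr (Equiv.subtypeEquivRight fun f => ⟨fun h i hi => ?_, fun h u v huv => ?_⟩)
  · exact h i (i + 1) (Fin.add_one_ne_self hn i).symm
      ((permCover_adj_of_ne (Fin.add_one_ne_self hn i).symm).2 (Or.inl ⟨rfl, hi⟩))
  · rw [permCover_adj_of_ne huv]
    rintro (⟨rfl, hv⟩ | ⟨rfl, hu⟩)
    · exact h u hv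
    · exact h v hu

theorem exists_le_permCover (hn : 2 ≤ n) {H : SimpleGraph (Fin n × Fin k)}
    (hH : IsDPCover (cycleGraph n) k H) : ∃ σ : Fin n → Perm (Fin k), H ≤ permCover σ := by
  obtain ⟨-, hcross, hmatch⟩ := hH
  choose σ hσ using fun u : Fin n =>
    have hadj := (cycleGraph_adj_iff_eq_add_one hn).2 (Or.inl rfl : u + 1 = u + 1 ∨ _)
    Perm.exists_extend_of_matching _ (hmatch u (u + 1) hadj).1 (hmatch u (u + 1) hadj).2
  refine ⟨σ, fun ⟨u, i⟩ ⟨v, j⟩ h => (fromRel_adj _ _ _).2 ⟨H.ne_of_adj h, ?_⟩⟩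
  rcases hcross u v i j h with rfl | hadj
  · exact Or.inl (Or.inl rfl)
  · rcases (cycleGraph_adj_iff_eq_add_one hn).1 hadj with rfl | rfl
    · exact Or.inl (Or.inr ⟨rfl, (hσ u i j h).symm⟩)
    · exact Or.inr (Or.inr ⟨rfl, (hσ v j i h.symm).symm⟩)

end PermCover

theorem properCount_cycleGraph_of_even {n k : ℕ} (hn : 2 ≤ n) (heven : Even n) (hk : 1 ≤ k) :
    properCount (cycleGraph n) k = (k - 1) ^ n + (k - 1) := by
  obtain ⟨m, rfl⟩ : ∃ m, n = m + 1 := ⟨n - 1, by omega⟩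
  have : NeZero k := ⟨by omega⟩
  have hcount := card_isPermCycleColoring_one (α := Fin k) heven
  rw [Fintype.card_fin] at hcount
  rw [properCount, ← hcount]
  refine Nat.card_congr (Equiv.subtypeEquivRight fun f => ?_)
  simp only [cycleGraph_adj_iff_eq_add_one hn, IsPermCycleColoring, Pi.one_apply, Perm.one_apply]
  refine ⟨fun h i => (h i (i + 1) (Or.inl rfl)).symm, ?_⟩
  rintro h u v (rfl | rfl)
  · exact (h u).symm
  · exact h v

theorem dpColorFn_cycleGraph_of_even {n k : ℕ} (hn : 3 ≤ n) (heven : Even n) (hk : 2 ≤ k) :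
    dpColorFn (cycleGraph n) k = (k - 1) ^ n - 1 := by
  obtain ⟨m, rfl⟩ : ∃ m, n = m + 1 := ⟨n - 1, by omega⟩
  obtain ⟨k, rfl⟩ : ∃ k', k = k' + 2 := ⟨k - 2, by omega⟩
  have hq : Fintype.card (Fin (k + 2)) = k + 2 := Fintype.card_fin _
  refine IsLeast.csInf_eq ⟨⟨_, isDPCover_permCover hn (Fin.snoc 1 (finRotate (k + 2))), ?_⟩, ?_⟩
  · rw [dpCount_permCover (by omega), card_isPermCycleColoring_snoc_one heven support_finRotate,
      hq]
  · rintro _ ⟨H, hH, rfl⟩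
    obtain ⟨σ, hle⟩ := exists_le_permCover (by omega) hH
    calc (k + 2 - 1) ^ (m + 1) - 1
        = (Fintype.card (Fin (k + 2)) - 1) ^ (m + 1) - 1 := by rw [hq]
      _ ≤ Nat.card {f // IsPermCycleColoring σ f} := sub_one_le_card_isPermCycleColoring heven σ
      _ = dpCount _ (permCover σ) := (dpCount_permCover (by omega) σ).symm
      _ ≤ dpCount _ H := dpCount_antitone _ hle

theorem stmt18 (n k : ℕ) (hn : 4 ≤ n) (heven : Even n) (hk : 2 ≤ k) :
    dpColorFn (SimpleGraph.cycleGraph n) k = (k - 1) ^ n - 1 ∧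
    properCount (SimpleGraph.cycleGraph n) k = (k - 1) ^ n + (k - 1) ∧
    dpColorFn (SimpleGraph.cycleGraph n) k <
      properCount (SimpleGraph.cycleGraph n) k := by
  have hdp := dpColorFn_cycleGraph_of_even (by omega) heven hk
  have hproper := properCount_cycleGraph_of_even (k := k) (by omega) heven (by omega)
  refine ⟨hdp, hproper, ?_⟩
  rw [hdp, hproper]
  omega
end
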